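/- arXiv:2307.13475 — 3 statements merged into one kernel-verified Lean document; each statement's English description precedes it below -/
import Mathlib

section
/- Let $W$ be symmetric positive definite, $D$ full column rank $q\times(p-1)$, $G\in\mathbb{R}^q$ with $\sigma_G = G'W^{1/2}M_dW^{1/2}G > 0$, and $Z_0 \in \mathbb{R}^q$. Define $H = -(D'WD)^{-1}D'W$ and consider $K(u, v) = (Z_0 + Du + \tfrac{1}{2}Gv)'W(Z_0 + Du + \tfrac{1}{2}Gv)$ over $u \in \mathbb{R}^{p-1}$, $v \geq 0$. Then the minimum over $(u,v)$ is attained at $v^* = -2Z\mathbf{1}(Z<0)/\sigma_G$ where $Z = G'W^{1/2}M_dW^{1/2}Z_0$, and $u^* = H(Z_0 + \tfrac{1}{2}Gv^*)$. -/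
/-!
Write `W = S²` with `S = W^{1/2}` symmetric and `A = S D`. Then `K(u, v) = |S z_v + A u|²` with
`z_v = Z₀ + (v/2) G`, and Pythagoras for the orthogonal projection onto the column space of `A`
splits this as `|M_d S z_v|² + |A (u - H z_v)|²`. The second term vanishes exactly at
`u = H z_v`, while the first is the scalar quadratic `c + v Z + v² σ_G / 4` in `v`, whose minimum
over `v ≥ 0` is at `v*`.
-/

open Matrix

namespace Matrix

section Rank

variable {m n K : Type*} [Fintype m] [Fintype n] [DecidableEq m] [DecidableEq n] [Field K]

theorem isUnit_of_rank_eq_card {M : Matrix n n K} (h : M.rank = Fintype.card n) : IsUnit M := by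
  rw [← mulVec_surjective_iff_isUnit, ← coe_mulVecLin, ← LinearMap.range_eq_top]
  exact Submodule.eq_top_of_finrank_eq (by rw [← rank, h, Module.finrank_fintype_fun_eq_card])

theorem isUnit_det_transpose_mul_self_of_rank_eq_card [LinearOrder K] [IsStrictOrderedRing K]
    {S : Matrix m m K} {D : Matrix m n K} (hS : IsUnit S.det) (hD : D.rank = Fintype.card n) :
    IsUnit ((S * D)ᵀ * (S * D)).det := by
  refine (isUnit_iff_isUnit_det _).1 (isUnit_of_rank_eq_card ?_)
  rw [rank_transpose_mul_self, rank_mul_eq_right_of_isUnit_det _ _ hS, hD]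

end Rank

section SymmetricSquareRoot

variable {m R : Type*} [Fintype m] [CommRing R] {S : Matrix m m R}

theorem dotProduct_mul_self_mulVec (hS : Sᵀ = S) (x : m → R) :
    x ⬝ᵥ (S * S) *ᵥ x = (S *ᵥ x) ⬝ᵥ (S *ᵥ x) := by
  rw [← mulVec_mulVec, dotProduct_mulVec, ← mulVec_transpose, hS]

theorem mulVec_dotProduct_mulVec_mulVec (hS : Sᵀ = S) (M : Matrix m m R) (x y : m → R) :
    (S *ᵥ x) ⬝ᵥ (M *ᵥ (S *ᵥ y)) = x ⬝ᵥ (S * M * S) *ᵥ y := by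
  rw [dotProduct_comm, dotProduct_mulVec, ← mulVec_transpose, hS, dotProduct_comm,
    mulVec_mulVec, mulVec_mulVec]

end SymmetricSquareRoot

section LeastSquares

variable {m n R : Type*} [Fintype m] [Fintype n] [DecidableEq m] [DecidableEq n] [CommRing R]
  (A : Matrix m n R)

noncomputable def leastSquaresInverse : Matrix n m R := (Aᵀ * A)⁻¹ * Aᵀ

/-- The paper's `M_d` is `residualMaker (W^{1/2} D)`. -/
noncomputable def residualMaker : Matrix m m R := 1 - A * leastSquaresInverse A

variable {A}

theorem residualMaker_mulVec (y : m → R) :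
    residualMaker A *ᵥ y = y - A *ᵥ (leastSquaresInverse A *ᵥ y) := by
  rw [residualMaker, sub_mulVec, one_mulVec, mulVec_mulVec]

theorem transpose_mul_residualMaker (hA : IsUnit (Aᵀ * A).det) : Aᵀ * residualMaker A = 0 := by
  rw [residualMaker, leastSquaresInverse, Matrix.mul_sub, Matrix.mul_one, ← Matrix.mul_assoc,
    ← Matrix.mul_assoc, mul_nonsing_inv _ hA, Matrix.one_mul, sub_self]

theorem residualMaker_mulVec_dotProduct_mulVec (hA : IsUnit (Aᵀ * A).det) (y : m → R)
    (u : n → R) : (residualMaker A *ᵥ y) ⬝ᵥ (A *ᵥ u) = 0 := by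
  rw [dotProduct_mulVec, ← mulVec_transpose, mulVec_mulVec, transpose_mul_residualMaker hA,
    zero_mulVec, zero_dotProduct]

theorem residualMaker_mulVec_dotProduct_residualMaker_mulVec (hA : IsUnit (Aᵀ * A).det)
    (y y' : m → R) :
    (residualMaker A *ᵥ y) ⬝ᵥ (residualMaker A *ᵥ y') =
      y ⬝ᵥ (residualMaker A *ᵥ y') := by
  rw [residualMaker_mulVec y, sub_dotProduct, dotProduct_comm (A *ᵥ _),
    residualMaker_mulVec_dotProduct_mulVec hA, sub_zero]

theorem dotProduct_self_add_mulVec (hA : IsUnit (Aᵀ * A).det) (y : m → R) (u : n → R) :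
    (y + A *ᵥ u) ⬝ᵥ (y + A *ᵥ u) =
      (residualMaker A *ᵥ y) ⬝ᵥ (residualMaker A *ᵥ y) +
        (A *ᵥ (u + leastSquaresInverse A *ᵥ y)) ⬝ᵥ
          (A *ᵥ (u + leastSquaresInverse A *ᵥ y)) := by
  have hsplit :
      y + A *ᵥ u = residualMaker A *ᵥ y + A *ᵥ (u + leastSquaresInverse A *ᵥ y) := by
    rw [residualMaker_mulVec, mulVec_add]; abel
  have horth := residualMaker_mulVec_dotProduct_mulVec hA y (u + leastSquaresInverse A *ᵥ y)
  rw [hsplit, add_dotProduct, dotProduct_add, dotProduct_add, dotProduct_comm (A *ᵥ _), horth,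
    add_zero, zero_add]

theorem dotProduct_self_residualMaker_mulVec_add_smul (hA : IsUnit (Aᵀ * A).det)
    (x g : m → R) (t : R) :
    (residualMaker A *ᵥ (x + t • g)) ⬝ᵥ (residualMaker A *ᵥ (x + t • g)) =
      (residualMaker A *ᵥ x) ⬝ᵥ (residualMaker A *ᵥ x) +
        2 * t * (g ⬝ᵥ (residualMaker A *ᵥ x)) +
        t ^ 2 * (g ⬝ᵥ (residualMaker A *ᵥ g)) := by
  simp only [mulVec_add, mulVec_smul, add_dotProduct, dotProduct_add, smul_dotProduct,
    dotProduct_smul, smul_eq_mul]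
  rw [dotProduct_comm (residualMaker A *ᵥ x) (residualMaker A *ᵥ g)]
  simp only [residualMaker_mulVec_dotProduct_residualMaker_mulVec hA]
  ring

theorem dotProduct_add_mulVec_mul_self_mulVec {S : Matrix m m R} (hS : Sᵀ = S) {D : Matrix m n R}
    (hSD : IsUnit ((S * D)ᵀ * (S * D)).det) (x : m → R) (u : n → R) :
    (x + D *ᵥ u) ⬝ᵥ (S * S) *ᵥ (x + D *ᵥ u) =
      (residualMaker (S * D) *ᵥ (S *ᵥ x)) ⬝ᵥ (residualMaker (S * D) *ᵥ (S *ᵥ x)) +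
        ((S * D) *ᵥ (u + leastSquaresInverse (S * D) *ᵥ (S *ᵥ x))) ⬝ᵥ
          ((S * D) *ᵥ (u + leastSquaresInverse (S * D) *ᵥ (S *ᵥ x))) := by
  rw [dotProduct_mul_self_mulVec hS, mulVec_add, mulVec_mulVec, dotProduct_self_add_mulVec hSD]

end LeastSquares

end Matrix

noncomputable def halfLineArgmin (Z σ : ℝ) : ℝ := -2 * Z * (if Z < 0 then 1 else 0) / σ

theorem halfLineArgmin_nonneg {Z σ : ℝ} (hσ : 0 < σ) : 0 ≤ halfLineArgmin Z σ := by
  unfold halfLineArgmin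
  split_ifs with hZ
  · exact div_nonneg (by linarith) hσ.le
  · simp

theorem halfLineArgmin_isMinOn {Z σ : ℝ} (hσ : 0 < σ) :
    IsMinOn (fun v => v * Z + v ^ 2 / 4 * σ) (Set.Ici 0) (halfLineArgmin Z σ) := by
  refine isMinOn_iff.2 fun v (hv : 0 ≤ v) => ?_
  unfold halfLineArgmin
  split_ifs with hZ
  · set t := -2 * Z * 1 / σ with ht
    have hZt : Z = -(t * σ) / 2 := by rw [ht]; field_simp
    rw [hZt]
    nlinarith [mul_nonneg hσ.le (sq_nonneg (v - t))]
  · rw [mul_zero, zero_div]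
    nlinarith [mul_nonneg hv (not_lt.1 hZ), mul_nonneg (sq_nonneg v) hσ.le]

theorem stmt_6_general {q r : ℕ}
    (W Whalf : Matrix (Fin q) (Fin q) ℝ)
    (hWhalf : Whalf.PosDef)
    (hsq : Whalf * Whalf = W)
    (D : Matrix (Fin q) (Fin r) ℝ) (hD : D.rank = r)
    (G Z0 : Fin q → ℝ)
    (Md : Matrix (Fin q) (Fin q) ℝ)
    (hMd : Md = 1 - Whalf * D * (Dᵀ * W * D)⁻¹ * Dᵀ * Whalf)
    (σG : ℝ) (hσG : σG = G ⬝ᵥ (Whalf * Md * Whalf).mulVec G) (hσGpos : 0 < σG)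
    (H : Matrix (Fin r) (Fin q) ℝ) (hH : H = -((Dᵀ * W * D)⁻¹ * Dᵀ * W))
    (K : (Fin r → ℝ) → ℝ → ℝ)
    (hK : ∀ u v, K u v =
      (Z0 + D.mulVec u + (v / 2) • G) ⬝ᵥ W.mulVec (Z0 + D.mulVec u + (v / 2) • G))
    (Z : ℝ) (hZ : Z = G ⬝ᵥ (Whalf * Md * Whalf).mulVec Z0)
    (vstar : ℝ) (hvstar : vstar = -2 * Z * (if Z < 0 then (1 : ℝ) else 0) / σG)
    (ustar : Fin r → ℝ) (hustar : ustar = H.mulVec (Z0 + (vstar / 2) • G)) :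
    0 ≤ vstar ∧ ∀ (u : Fin r → ℝ) (v : ℝ), 0 ≤ v → K ustar vstar ≤ K u v := by
  have hsym : Whalfᵀ = Whalf := hWhalf.isHermitian
  have hgram : (Whalf * D)ᵀ * (Whalf * D) = Dᵀ * W * D := by
    rw [transpose_mul, hsym, ← hsq]; simp only [Matrix.mul_assoc]
  have hunit : IsUnit ((Whalf * D)ᵀ * (Whalf * D)).det :=
    isUnit_det_transpose_mul_self_of_rank_eq_card hWhalf.det_pos.ne'.isUnit
      (hD.trans (Fintype.card_fin r).symm)
  have hMdA : Md = residualMaker (Whalf * D) := by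
    rw [hMd, residualMaker, leastSquaresInverse, hgram, transpose_mul, hsym]
    simp only [Matrix.mul_assoc]
  have hHA : H = -(leastSquaresInverse (Whalf * D) * Whalf) := by
    rw [hH, leastSquaresInverse, hgram, transpose_mul, hsym, ← hsq]
    simp only [Matrix.mul_assoc]
  have hdecomp : ∀ u v, K u v =
      (Md *ᵥ (Whalf *ᵥ Z0)) ⬝ᵥ (Md *ᵥ (Whalf *ᵥ Z0)) + (v * Z + v ^ 2 / 4 * σG) +
        ((Whalf * D) *ᵥ (u - H *ᵥ (Z0 + (v / 2) • G))) ⬝ᵥ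
          ((Whalf * D) *ᵥ (u - H *ᵥ (Z0 + (v / 2) • G))) := by
    intro u v
    rw [hK, show Z0 + D *ᵥ u + (v / 2) • G = (Z0 + (v / 2) • G) + D *ᵥ u by abel, ← hsq,
      dotProduct_add_mulVec_mul_self_mulVec hsym hunit, hHA, neg_mulVec, sub_neg_eq_add,
      ← mulVec_mulVec _ _ Whalf, ← hMdA]
    congr 1
    rw [mulVec_add, mulVec_smul, hMdA, dotProduct_self_residualMaker_mulVec_add_smul hunit,
      ← hMdA, mulVec_dotProduct_mulVec_mulVec hsym, mulVec_dotProduct_mulVec_mulVec hsym, ← hZ,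
      ← hσG]
    ring
  have hvstar' : vstar = halfLineArgmin Z σG := hvstar
  refine ⟨hvstar' ▸ halfLineArgmin_nonneg hσGpos, fun u v hv => ?_⟩
  have hmin := isMinOn_iff.1 (halfLineArgmin_isMinOn (Z := Z) hσGpos) v hv
  have hfit_nonneg :=
    dotProduct_star_self_nonneg ((Whalf * D) *ᵥ (u - H *ᵥ (Z0 + (v / 2) • G)))
  rw [star_trivial] at hfit_nonneg
  rw [hdecomp, hdecomp, hustar, sub_self, mulVec_zero, dotProduct_zero,
    add_zero, hvstar']
  linarith

/-- the minimum of
`K(u,v) = (Z₀ + Du + (v/2)G)' W (Z₀ + Du + (v/2)G)` over `u ∈ ℝ^{p-1}`,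
`v ≥ 0` is attained at `v* = -2Z·1(Z<0)/σ_G`, `u* = H(Z₀ + (v*/2)G)`. -/
theorem stmt_6 {q r : ℕ}
    (W Whalf : Matrix (Fin q) (Fin q) ℝ)
    (hW : W.PosDef) (hWhalf : Whalf.PosDef) (hWhalfsym : Whalfᵀ = Whalf)
    (hsq : Whalf * Whalf = W)
    (D : Matrix (Fin q) (Fin r) ℝ) (hD : D.rank = r)
    (G Z0 : Fin q → ℝ)
    (Md : Matrix (Fin q) (Fin q) ℝ)
    (hMd : Md = 1 - Whalf * D * (Dᵀ * W * D)⁻¹ * Dᵀ * Whalf)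
    (σG : ℝ) (hσG : σG = G ⬝ᵥ (Whalf * Md * Whalf).mulVec G) (hσGpos : 0 < σG)
    (H : Matrix (Fin r) (Fin q) ℝ) (hH : H = -((Dᵀ * W * D)⁻¹ * Dᵀ * W))
    (K : (Fin r → ℝ) → ℝ → ℝ)
    (hK : ∀ u v, K u v =
      (Z0 + D.mulVec u + (v / 2) • G) ⬝ᵥ W.mulVec (Z0 + D.mulVec u + (v / 2) • G))
    (Z : ℝ) (hZ : Z = G ⬝ᵥ (Whalf * Md * Whalf).mulVec Z0)
    (vstar : ℝ) (hvstar : vstar = -2 * Z * (if Z < 0 then (1 : ℝ) else 0) / σG)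
    (ustar : Fin r → ℝ) (hustar : ustar = H.mulVec (Z0 + (vstar / 2) • G)) :
    0 ≤ vstar ∧ ∀ (u : Fin r → ℝ) (v : ℝ), 0 ≤ v → K ustar vstar ≤ K u v :=
  stmt_6_general W Whalf hWhalf hsq D hD G Z0 Md hMd σG hσG hσGpos H hH K hK Z hZ vstar hvstar ustar
    hustar
end

section
/- Let $q > p$ and let $(\mathbb{Z}_0, \mathbb{Z}_1)$ be jointly Gaussian mean-zero $\mathbb{R}^q \times \mathbb{R}^q$ with full-rank joint covariance. With $M_{dg}$ of rank $q-p > 0$ as above, and any fixed vectors/matrices $L$, $G_{1p}$, $H$, $G$, $\sigma_G > 0$, the random variable $\mathbb{R}_1 = (\mathbb{Z}_0'W^{1/2}P_gW^{1/2}\mathbb{Z}_0 G' - G'W^{1/2}P_gW^{1/2}\mathbb{Z}_0\mathbb{Z}_0')W^{1/2}M_dW^{1/2}(\tfrac{1}{3}L + G_{1p}HG)/\sigma_G + \mathbb{Z}_0'W^{1/2}M_{dg}W^{1/2}(\mathbb{Z}_1 + G_{1p}H\mathbb{Z}_0)$ satisfies $\Pr(\mathbb{R}_1 = 0) = 0$.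 -/
/-!
Write `B = W^{1/2} M_dg W^{1/2}`, which is nonzero because `M_dg` has positive rank. Then
`ℝ₁ = a(𝒵₀) + (𝒵₀ᵀ B) ⬝ 𝒵₁` for a continuous `a`. The law of `(𝒵₀, 𝒵₁) = A ξ` is absolutely
continuous with respect to Lebesgue measure, and the zero set of such a function is Lebesgue-null
by Fubini: for almost every `x₀` the row `x₀ᵀ B` is nonzero, so the slice in `x₁` is an affine
hyperplane.
-/

open Matrix MeasureTheory ProbabilityTheory

namespace MeasureTheory.Measure.AbsolutelyContinuous

theorem pi_fin : ∀ {n : ℕ} {α : Fin n → Type*} [∀ i, MeasurableSpace (α i)]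
    {μ ν : ∀ i, Measure (α i)} [∀ i, SigmaFinite (μ i)] [∀ i, SigmaFinite (ν i)],
    (∀ i, μ i ≪ ν i) → Measure.pi μ ≪ Measure.pi ν
  | 0, _, _, μ, ν, _, _, _ => by rw [Measure.pi_of_empty μ, Measure.pi_of_empty ν]
  | n + 1, α, _, μ, ν, _, _, h => by
    rw [← (MeasurePreserving.symm _ (measurePreserving_piFinSuccAbove μ 0)).map_eq,
      ← (MeasurePreserving.symm _ (measurePreserving_piFinSuccAbove ν 0)).map_eq]
    exact ((h 0).prod (pi_fin fun i => h _)).map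
      (MeasurableEquiv.piFinSuccAbove α 0).symm.measurable

theorem pi {ι : Type*} [Fintype ι] {α : ι → Type*} [∀ i, MeasurableSpace (α i)]
    {μ ν : ∀ i, Measure (α i)} [∀ i, SigmaFinite (μ i)] [∀ i, SigmaFinite (ν i)]
    (h : ∀ i, μ i ≪ ν i) : Measure.pi μ ≪ Measure.pi ν := by
  let e := (Fintype.equivFin ι).symm
  rw [← Measure.pi_map_piCongrLeft e μ, ← Measure.pi_map_piCongrLeft e ν]
  exact (pi_fin fun i => h (e i)).map (MeasurableEquiv.piCongrLeft _ e).measurable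

theorem map_mulVec {ι : Type*} [Fintype ι] [DecidableEq ι] {μ : Measure (ι → ℝ)}
    (hμ : μ ≪ volume) {A : Matrix ι ι ℝ} (hA : A.det ≠ 0) : μ.map (A *ᵥ ·) ≪ volume := by
  have hA' : (A *ᵥ ·) = Matrix.toLin' A := rfl
  rw [hA']
  refine (hμ.map (LinearMap.continuous_of_finiteDimensional _).measurable).trans ?_
  rw [Real.map_matrix_volume_pi_eq_smul_volume_pi hA]
  exact Measure.smul_absolutelyContinuous

end MeasureTheory.Measure.AbsolutelyContinuous

theorem pi_gaussianReal_absolutelyContinuous_volume (ι : Type*) [Fintype ι] :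
    Measure.pi (fun _ : ι => gaussianReal 0 1) ≪ volume := by
  rw [volume_pi]
  exact .pi fun _ => gaussianReal_absolutelyContinuous 0 one_ne_zero

theorem MeasureTheory.Measure.addHaar_preimage_singleton_of_ne_zero {E : Type*}
    [NormedAddCommGroup E] [NormedSpace ℝ E] [MeasurableSpace E] [BorelSpace E]
    [FiniteDimensional ℝ E] (μ : Measure E) [μ.IsAddHaarMeasure] {f : E →ₗ[ℝ] ℝ} (hf : f ≠ 0)
    (d : ℝ) : μ (f ⁻¹' {d}) = 0 := by
  have hlevel := Measure.addHaar_affineSubspace μ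
    (AffineSubspace.comap f.toAffineMap (AffineSubspace.mk' d ⊥)) fun htop => hf ?_
  · convert hlevel using 2
    ext x
    simp [sub_eq_zero]
  have hd : ∀ x, f x = d := fun x => by
    simpa [sub_eq_zero] using (htop ▸ AffineSubspace.mem_top ℝ E x :
      x ∈ AffineSubspace.comap f.toAffineMap (AffineSubspace.mk' d ⊥))
  ext x
  simpa [← hd 0] using hd x

theorem ae_vecMul_ne_zero {m n : Type*} [Fintype m] {B : Matrix m n ℝ} (hB : B ≠ 0) :
    ∀ᵐ x ∂(volume : Measure (m → ℝ)), x ᵥ* B ≠ 0 := by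
  have hker : LinearMap.ker B.vecMulLinear ≠ ⊤ := fun htop =>
    hB (vecMul_injective (funext fun x => by
      simpa using (htop.symm ▸ Submodule.mem_top : x ∈ LinearMap.ker B.vecMulLinear)))
  rw [ae_iff]
  convert Measure.addHaar_submodule volume _ hker using 2
  ext x
  simp

theorem measure_prod_setOf_add_dotProduct_eq_zero {α κ : Type*} [MeasurableSpace α] [Fintype κ]
    (μ : Measure α) {a : α → ℝ} {b : α → κ → ℝ} (ha : Measurable a) (hb : Measurable b)
    (hb0 : ∀ᵐ x ∂μ, b x ≠ 0) :
    (μ.prod volume) {p : α × (κ → ℝ) | a p.1 + b p.1 ⬝ᵥ p.2 = 0} = 0 := by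
  rw [Measure.measure_prod_null (measurableSet_eq_fun (by fun_prop) measurable_const)]
  filter_upwards [hb0] with x hx
  have hslice : Prod.mk x ⁻¹' {p : α × (κ → ℝ) | a p.1 + b p.1 ⬝ᵥ p.2 = 0}
      = dotProductBilin ℝ ℝ (b x) ⁻¹' {-a x} := by
    ext y
    simp [eq_neg_iff_add_eq_zero, add_comm]
  rw [hslice]
  refine Measure.addHaar_preimage_singleton_of_ne_zero _ (fun h => hx ?_) _
  simpa using LinearMap.congr_fun h (b x)

theorem volume_setOf_add_dotProduct_eq_zero {ι κ : Type*} [Fintype ι] [Fintype κ]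
    {a : (ι → ℝ) → ℝ} {b : (ι → ℝ) → κ → ℝ} (ha : Measurable a) (hb : Measurable b)
    (hb0 : ∀ᵐ x, b x ≠ 0) :
    volume {z : ι ⊕ κ → ℝ | a (z ∘ Sum.inl) + b (z ∘ Sum.inl) ⬝ᵥ (z ∘ Sum.inr) = 0} = 0 := by
  rw [← (volume_measurePreserving_sumPiEquivProdPi_symm fun _ : ι ⊕ κ => ℝ).map_eq,
    MeasurableEquiv.map_apply]
  exact measure_prod_setOf_add_dotProduct_eq_zero volume ha hb hb0

theorem quasiMeasurePreserving_mulVec_of_iIndepFun_gaussianReal {Ω ι : Type*}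
    [MeasurableSpace Ω] {P : Measure Ω} [Fintype ι] [DecidableEq ι]
    {ξ : Ω → ι → ℝ} (hmeas : ∀ i, Measurable fun ω => ξ ω i)
    (hiid : iIndepFun (fun i ω => ξ ω i) P)
    (hlaw : ∀ i, P.map (fun ω => ξ ω i) = gaussianReal 0 1)
    {A : Matrix ι ι ℝ} (hA : A.det ≠ 0) :
    Measure.QuasiMeasurePreserving (fun ω => A *ᵥ ξ ω) P volume := by
  have hξ : Measurable ξ := measurable_pi_lambda _ hmeas
  have hAcont : Continuous (A *ᵥ ·) := continuous_const.matrix_mulVec continuous_id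
  refine ⟨hAcont.measurable.comp hξ, ?_⟩
  have hlawξ : P.map ξ = Measure.pi fun _ => gaussianReal 0 1 := by
    rw [← funext hlaw]
    exact hiid.map_fun_eq_pi_map fun i => (hmeas i).aemeasurable
  rw [← Function.comp_def, ← Measure.map_map hAcont.measurable hξ, hlawξ]
  exact (pi_gaussianReal_absolutelyContinuous_volume ι).map_mulVec hA

theorem stmt_12_general {q r : ℕ} (hqp : q > r + 1)
    (Whalf : Matrix (Fin q) (Fin q) ℝ)
    (hWhalf : Whalf.PosDef)
    (G : Fin q → ℝ)
    (Md Pg Mdg : Matrix (Fin q) (Fin q) ℝ)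
    (σG : ℝ)
    (hMdgrank : Mdg.rank = q - (r + 1))
    (H : Matrix (Fin r) (Fin q) ℝ)
    (L : Fin q → ℝ) (G1p : Matrix (Fin q) (Fin r) ℝ)
    {Ω : Type*} [MeasurableSpace Ω] (P : Measure Ω)
    (Z0 Z1 : Ω → Fin q → ℝ)
    (ξ : Ω → (Fin q ⊕ Fin q) → ℝ)
    (hmeas : ∀ i, Measurable (fun ω => ξ ω i))
    (hiid : iIndepFun (fun i ω => ξ ω i) P)
    (hlaw : ∀ i, Measure.map (fun ω => ξ ω i) P = gaussianReal 0 1)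
    (A : Matrix (Fin q ⊕ Fin q) (Fin q ⊕ Fin q) ℝ) (hA : IsUnit A)
    (hZ : ∀ ω, Sum.elim (Z0 ω) (Z1 ω) = A.mulVec (ξ ω))
    (R1 : Ω → ℝ)
    (hR1 : ∀ ω, R1 ω =
      (((Z0 ω ⬝ᵥ (Whalf * Pg * Whalf).mulVec (Z0 ω)) • G
          - (G ⬝ᵥ (Whalf * Pg * Whalf).mulVec (Z0 ω)) • Z0 ω) ⬝ᵥ
        (Whalf * Md * Whalf).mulVec ((1 / 3 : ℝ) • L + G1p.mulVec (H.mulVec G))) / σG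
      + Z0 ω ⬝ᵥ (Whalf * Mdg * Whalf).mulVec (Z1 ω + G1p.mulVec (H.mulVec (Z0 ω)))) :
    P {ω | R1 ω = 0} = 0 := by
  set B := Whalf * Mdg * Whalf
  have hMdg : Mdg ≠ 0 := by
    rintro rfl
    rw [Matrix.rank_zero] at hMdgrank
    omega
  have hB : B ≠ 0 := by
    simpa [B, hWhalf.isUnit.mul_right_eq_zero, hWhalf.isUnit.mul_left_eq_zero] using hMdg
  let a : (Fin q → ℝ) → ℝ := fun x =>
    (((x ⬝ᵥ (Whalf * Pg * Whalf) *ᵥ x) • G - (G ⬝ᵥ (Whalf * Pg * Whalf) *ᵥ x) • x) ⬝ᵥ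
      (Whalf * Md * Whalf) *ᵥ ((1 / 3 : ℝ) • L + G1p *ᵥ H *ᵥ G)) / σG
      + x ⬝ᵥ B *ᵥ G1p *ᵥ H *ᵥ x
  have hR1_split : ∀ ω, R1 ω = a (Z0 ω) + (Z0 ω ᵥ* B) ⬝ᵥ Z1 ω := fun ω => by
    rw [hR1, mulVec_add B, dotProduct_add (Z0 ω), dotProduct_mulVec (Z0 ω) B (Z1 ω)]
    ring
  have hZξ := quasiMeasurePreserving_mulVec_of_iIndepFun_gaussianReal hmeas hiid hlaw
    ((Matrix.isUnit_iff_isUnit_det A).mp hA).ne_zero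
  refine measure_mono_null (fun ω hω => ?_) (hZξ.preimage_null
    (volume_setOf_add_dotProduct_eq_zero (a := a) (b := (· ᵥ* B)) (by fun_prop) (by fun_prop)
      (ae_vecMul_ne_zero hB)))
  simpa [← hZ ω, ← hR1_split] using hω

/-- Lemma 2(a2): in the overidentified case `q > p`, with
`(𝒵₀, 𝒵₁)` jointly Gaussian mean-zero with full-rank joint covariance and
`M_{dg}` of rank `q - p > 0`, the random variable `ℝ₁` satisfies
`Pr(ℝ₁ = 0) = 0`. -/
theorem stmt_12 {q r : ℕ} (hqp : q > r + 1)
    (W Whalf : Matrix (Fin q) (Fin q) ℝ)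
    (hW : W.PosDef) (hWhalf : Whalf.PosDef) (hWhalfsym : Whalfᵀ = Whalf)
    (hsq : Whalf * Whalf = W)
    (D : Matrix (Fin q) (Fin r) ℝ) (hD : D.rank = r)
    (G : Fin q → ℝ)
    (hDG : (Matrix.fromCols D (Matrix.replicateCol (Fin 1) G)).rank = r + 1)
    (Md Pg Mdg : Matrix (Fin q) (Fin q) ℝ)
    (hMd : Md = 1 - Whalf * D * (Dᵀ * W * D)⁻¹ * Dᵀ * Whalf)
    (σG : ℝ) (hσG : σG = G ⬝ᵥ (Whalf * Md * Whalf).mulVec G) (hσGpos : 0 < σG)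
    (hPg : Pg = σG⁻¹ •
      Matrix.vecMulVec (Md.mulVec (Whalf.mulVec G)) (Md.mulVec (Whalf.mulVec G)))
    (hMdg : Mdg = Md - Pg) (hMdgrank : Mdg.rank = q - (r + 1))
    (H : Matrix (Fin r) (Fin q) ℝ) (hH : H = -((Dᵀ * W * D)⁻¹ * Dᵀ * W))
    (L : Fin q → ℝ) (G1p : Matrix (Fin q) (Fin r) ℝ)
    {Ω : Type*} [MeasurableSpace Ω] (P : Measure Ω) [IsProbabilityMeasure P]
    (Z0 Z1 : Ω → Fin q → ℝ)
    (ξ : Ω → (Fin q ⊕ Fin q) → ℝ)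
    (hmeas : ∀ i, Measurable (fun ω => ξ ω i))
    (hiid : iIndepFun (fun i ω => ξ ω i) P)
    (hlaw : ∀ i, Measure.map (fun ω => ξ ω i) P = gaussianReal 0 1)
    (A : Matrix (Fin q ⊕ Fin q) (Fin q ⊕ Fin q) ℝ) (hA : IsUnit A)
    (hZ : ∀ ω, Sum.elim (Z0 ω) (Z1 ω) = A.mulVec (ξ ω))
    (R1 : Ω → ℝ)
    (hR1 : ∀ ω, R1 ω =
      (((Z0 ω ⬝ᵥ (Whalf * Pg * Whalf).mulVec (Z0 ω)) • G
          - (G ⬝ᵥ (Whalf * Pg * Whalf).mulVec (Z0 ω)) • Z0 ω) ⬝ᵥ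
        (Whalf * Md * Whalf).mulVec ((1 / 3 : ℝ) • L + G1p.mulVec (H.mulVec G))) / σG
      + Z0 ω ⬝ᵥ (Whalf * Mdg * Whalf).mulVec (Z1 ω + G1p.mulVec (H.mulVec (Z0 ω)))) :
    P {ω | R1 ω = 0} = 0 :=
  stmt_12_general hqp Whalf hWhalf G Md Pg Mdg σG hMdgrank H L G1p P Z0 Z1 ξ hmeas hiid hlaw A hA hZ
    R1 hR1
end

section
/- Let $m: \mathbb{R}^p \to \mathbb{R}^q$ be twice continuously differentiable with Jacobian $M = Dm(\phi_0)$ and second-derivative arrays $M_k^{(2)} = D^2 m_k(\phi_0)$, $k = 1,\ldots,q$. Suppose the second-order local identification condition holds: for all $u$ in the range of $M'$ and all $v$ in the null space of $M$, $Mu + (v'M_k^{(2)}v)_{1\le k\le q} = 0$ implies $u = v = 0$. Then there is no sequence $\phi_n \to \phi_0$ with $\phi_n \neq \phi_0$ and $m(\phi_n) = m(\phi_0)$ for all $n$; i.e., $\phi_0$ is locally identified by $m(\phi) = m(\phi_0)$. -/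
/-!
Suppose `φₙ → φ₀`, `φₙ ≠ φ₀` and `m φₙ = m φ₀`. Along a subsequence the unit directions of
`hₙ = φₙ - φ₀` converge to some `v` with `‖v‖ = 1`. Second-order Taylor expansion gives
`M hₙ + ½ B hₙ hₙ = o(‖hₙ‖²)`, where `M`, `B` are the first and second derivatives at `φ₀`.
Dividing by `‖hₙ‖` yields `M v = 0`; dividing by `‖hₙ‖²` shows that `B v v` is a limit of points
of `range M`, which is closed. Writing `-B v v = M u` with `u ∈ range Mᵀ` (possible since
`range (M Mᵀ) = range M`), the identification condition forces `v = 0`, a contradiction.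
-/

open Filter Topology Asymptotics

section

variable {E F : Type*} [NormedAddCommGroup E] [NormedSpace ℝ E]
  [NormedAddCommGroup F] [NormedSpace ℝ F]

theorem ContDiff.isLittleO_taylor_two {m : E → F} (hm : ContDiff ℝ 2 m) (x₀ : E) :
    (fun x => m x - m x₀ - fderiv ℝ m x₀ (x - x₀)
        - (2 : ℝ)⁻¹ • fderiv ℝ (fderiv ℝ m) x₀ (x - x₀) (x - x₀))
      =o[𝓝 x₀] fun x => ‖x - x₀‖ ^ 2 := by
  set M := fderiv ℝ m x₀
  set B := fderiv ℝ (fderiv ℝ m) x₀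
  have hsymm : ∀ v w, B v w = B w v := hm.contDiffAt.isSymmSndFDerivAt (by simp)
  have hB : HasFDerivAt (fderiv ℝ m) B x₀ :=
    ((hm.fderiv_right le_rfl).differentiable one_ne_zero x₀).hasFDerivAt
  have hsub : ∀ x, HasFDerivAt (fun y : E => y - x₀) (ContinuousLinearMap.id ℝ E) x :=
    fun x => (hasFDerivAt_id x).sub_const x₀
  -- the symmetry of `B` makes `B (x - x₀)` the derivative of the quadratic term
  have hquad : ∀ x, HasFDerivAt (fun y => (2 : ℝ)⁻¹ • B (y - x₀) (y - x₀)) (B (x - x₀)) x := by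
    intro x
    refine ((B.hasFDerivAt_of_bilinear (hsub x) (hsub x)).const_smul (2 : ℝ)⁻¹).congr_fderiv ?_
    ext k
    simp [hsymm k]
    module
  have hderiv : ∀ x ∈ Set.univ, HasFDerivWithinAt
      (fun x => m x - m x₀ - M (x - x₀) - (2 : ℝ)⁻¹ • B (x - x₀) (x - x₀))
      (fderiv ℝ m x - M - B (x - x₀)) Set.univ x := fun x _ =>
    ((((hm.differentiable two_ne_zero x).hasFDerivAt.sub_const (m x₀)).sub
      (M.hasFDerivAt.comp x (hsub x))).sub (hquad x)).hasFDerivWithinAt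
  have hsmall : (fun x => fderiv ℝ m x - M - B (x - x₀)) =o[𝓝 x₀] fun x => ‖x - x₀‖ ^ 1 := by
    simpa using hB.isLittleO
  simpa using convex_univ.isLittleO_pow_succ (Set.mem_univ x₀) hderiv (by simpa using hsmall)

section SecondOrderAsymptotics

variable {α : Type*} {l : Filter α} (M : E →L[ℝ] F) (B : E →L[ℝ] E →L[ℝ] F) {h : α → E}

theorem tendsto_inv_norm_smul_apply_normalize_add_of_isLittleO
    (hres : (fun n => M (h n) + (2 : ℝ)⁻¹ • B (h n) (h n)) =o[l] fun n => ‖h n‖ ^ 2) :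
    Tendsto (fun n => ‖h n‖⁻¹ • M (NormedSpace.normalize (h n))
      + (2 : ℝ)⁻¹ • B (NormedSpace.normalize (h n)) (NormedSpace.normalize (h n))) l (𝓝 0) := by
  refine hres.tendsto_inv_smul_nhds_zero.congr fun n => ?_
  simp only [NormedSpace.normalize, map_smul, smul_apply, smul_add, smul_smul]
  module

variable [l.NeBot] {v : E}

theorem apply_eq_zero_of_isLittleO (hh : Tendsto h l (𝓝 0))
    (hdir : Tendsto (fun n => NormedSpace.normalize (h n)) l (𝓝 v))
    (hres : (fun n => M (h n) + (2 : ℝ)⁻¹ • B (h n) (h n)) =o[l] fun n => ‖h n‖ ^ 2) :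
    M v = 0 := by
  set d := fun n => NormedSpace.normalize (h n)
  set s := fun n => ‖h n‖⁻¹ • M (d n) + (2 : ℝ)⁻¹ • B (d n) (d n)
  have hs : Tendsto s l (𝓝 0) := tendsto_inv_norm_smul_apply_normalize_add_of_isLittleO M B hres
  have hBdd : Tendsto (fun n => B (d n) (d n)) l (𝓝 (B v v)) :=
    (B.continuous₂.tendsto (v, v)).comp (hdir.prodMk_nhds hdir)
  have hM : ∀ n, M (d n) = ‖h n‖ • (s n - (2 : ℝ)⁻¹ • B (d n) (d n)) := by
    intro n
    rcases eq_or_ne (h n) 0 with h0 | h0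
    · simp [d, h0]
    · simp [s, d, smul_smul, h0]
  have hlim : Tendsto (fun n => M (d n)) l (𝓝 0) := by
    rw [funext hM]
    simpa using (tendsto_norm_zero.comp hh).smul (hs.sub (hBdd.const_smul (2 : ℝ)⁻¹))
  exact tendsto_nhds_unique ((M.continuous.tendsto v).comp hdir) hlim

theorem mem_closure_range_of_isLittleO
    (hdir : Tendsto (fun n => NormedSpace.normalize (h n)) l (𝓝 v))
    (hres : (fun n => M (h n) + (2 : ℝ)⁻¹ • B (h n) (h n)) =o[l] fun n => ‖h n‖ ^ 2) :
    B v v ∈ closure (Set.range M) := by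
  set d := fun n => NormedSpace.normalize (h n)
  have hs : Tendsto (fun n => ‖h n‖⁻¹ • M (d n) + (2 : ℝ)⁻¹ • B (d n) (d n)) l (𝓝 0) :=
    tendsto_inv_norm_smul_apply_normalize_add_of_isLittleO M B hres
  have hBdd : Tendsto (fun n => B (d n) (d n)) l (𝓝 (B v v)) :=
    (B.continuous₂.tendsto (v, v)).comp (hdir.prodMk_nhds hdir)
  have hlim : Tendsto (fun n => B (d n) (d n) - (2 : ℝ) • (‖h n‖⁻¹ • M (d n)
      + (2 : ℝ)⁻¹ • B (d n) (d n))) l (𝓝 (B v v)) := by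
    simpa using hBdd.sub (hs.const_smul (2 : ℝ))
  refine mem_closure_of_tendsto (hlim.congr fun n => ?_)
    (Eventually.of_forall fun n => Set.mem_range_self (-(2 * ‖h n‖⁻¹) • d n))
  simp only [map_smul, smul_add, smul_smul]
  module

end SecondOrderAsymptotics

end

theorem exists_subseq_tendsto_normalize {V : Type*} [NormedAddCommGroup V] [NormedSpace ℝ V]
    [ProperSpace V] {x : ℕ → V} (hx : ∀ n, x n ≠ 0) :
    ∃ v, ‖v‖ = 1 ∧ ∃ ψ : ℕ → ℕ, StrictMono ψ ∧
      Tendsto (fun n => NormedSpace.normalize (x (ψ n))) atTop (𝓝 v) := by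
  obtain ⟨v, hv, ψ, hψ, hlim⟩ := (isCompact_sphere (0 : V) 1).tendsto_subseq
    (x := fun n => NormedSpace.normalize (x n))
    fun n => by simpa using NormedSpace.norm_normalize_eq_one_iff.2 (hx n)
  exact ⟨v, by simpa using hv, ψ, hψ, hlim⟩

theorem ContinuousLinearMap.exists_mem_range_adjoint_apply_eq {E F : Type*}
    [NormedAddCommGroup E] [InnerProductSpace ℝ E] [FiniteDimensional ℝ E]
    [NormedAddCommGroup F] [InnerProductSpace ℝ F] [FiniteDimensional ℝ F]
    (M : E →L[ℝ] F) {b : F} (hb : b ∈ Set.range M) :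
    ∃ u ∈ Set.range (adjoint M), M u = b := by
  have : b ∈ LinearMap.range ((M : E →ₗ[ℝ] F) ∘ₗ (M : E →ₗ[ℝ] F).adjoint) := by
    rw [LinearMap.range_self_comp_adjoint]
    exact hb
  obtain ⟨y, rfl⟩ := this
  exact ⟨adjoint M y, ⟨y, rfl⟩, rfl⟩

/-- Dovonon–Renault: if `m` is `C²` and the second-order local
identification condition holds at `φ₀` — for all `u` in the range of the
adjoint of the Jacobian and `v` in its kernel,
`M u + (v' M_k⁽²⁾ v)_k = 0` implies `u = v = 0` — then there is no sequence
`φₙ → φ₀`, `φₙ ≠ φ₀`, with `m(φₙ) = m(φ₀)` for all `n`. -/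
theorem stmt_15 {p q : ℕ}
    (m : EuclideanSpace ℝ (Fin p) → EuclideanSpace ℝ (Fin q))
    (hm : ContDiff ℝ 2 m) (φ0 : EuclideanSpace ℝ (Fin p))
    (hid : ∀ u v : EuclideanSpace ℝ (Fin p),
      u ∈ Set.range (ContinuousLinearMap.adjoint (fderiv ℝ m φ0)) →
      (fderiv ℝ m φ0) v = 0 →
      (fderiv ℝ m φ0) u + iteratedFDeriv ℝ 2 m φ0 ![v, v] = 0 →
      u = 0 ∧ v = 0) :
    ¬ ∃ φn : ℕ → EuclideanSpace ℝ (Fin p),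
      (∀ n, φn n ≠ φ0) ∧ Tendsto φn atTop (nhds φ0) ∧ ∀ n, m (φn n) = m φ0 := by
  rintro ⟨φn, hne, htend, heq⟩
  set M := fderiv ℝ m φ0
  set B := fderiv ℝ (fderiv ℝ m) φ0
  obtain ⟨v, hv, ψ, hψ, hdir⟩ :=
    exists_subseq_tendsto_normalize (x := fun n => φn n - φ0) fun n => sub_ne_zero.2 (hne n)
  have hsub : Tendsto (fun n => φn (ψ n)) atTop (𝓝 φ0) := htend.comp hψ.tendsto_atTop
  have hres : (fun n => M (φn (ψ n) - φ0) + (2 : ℝ)⁻¹ • B (φn (ψ n) - φ0) (φn (ψ n) - φ0))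
      =o[atTop] fun n => ‖φn (ψ n) - φ0‖ ^ 2 := by
    refine ((hm.isLittleO_taylor_two φ0).comp_tendsto hsub).neg_left.congr_left fun n => ?_
    simp only [Function.comp_apply, heq, sub_self, zero_sub]
    abel
  have hMv : M v = 0 := apply_eq_zero_of_isLittleO M B (tendsto_sub_nhds_zero_iff.2 hsub) hdir hres
  have hclosed : IsClosed (Set.range M) := by
    simpa [LinearMap.coe_range] using (LinearMap.range M.toLinearMap).closed_of_finiteDimensional
  have hBv : B v v ∈ Set.range M :=
    hclosed.closure_eq ▸ mem_closure_range_of_isLittleO M B hdir hres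
  obtain ⟨u, hu, hMu⟩ := M.exists_mem_range_adjoint_apply_eq (b := -B v v) (by
    obtain ⟨x, hx⟩ := hBv; exact ⟨-x, by simp [hx]⟩)
  have hv0 := (hid u v hu hMv (by simp [iteratedFDeriv_two_apply, hMu, B])).2
  simp [hv0] at hv
end
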